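/- Let A be a C*-algebra and a, b positive elements of A with ‖a - b‖ < ε. Then the positive part (a - ε)₊ is Cuntz subequivalent to b, i.e., for every δ > 0 there exists x ∈ A with ‖x* b x - (a - ε)₊‖ < δ. -/

import Mathlib

/-!
Let `g t = max (t - ε) 0` and `q = √g(a)`. Since `ε g(t) ≤ t g(t)`, we get `ε g(a) ≤ q a q`,
while `q (a - b) q ≤ ‖a - b‖ q² = ‖a - b‖ g(a)`; hence `(ε - ‖a - b‖) g(a) ≤ q b q`. For positive
elements, `u ≤ v` implies `u ≾ v` (conjugate `v` by `(v + η)^(-1/2) √u`); positive scalars do not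
matter for `≾`, and `q b q ≾ b`.
-/

/-- Cuntz subequivalence: `a ≾ b` if for every `δ > 0` there is `x` with
`‖x* b x - a‖ < δ`. -/
def CuntzSub {A : Type*} [NonUnitalCStarAlgebra A] (a b : A) : Prop :=
  ∀ δ : ℝ, 0 < δ → ∃ x : A, ‖star x * b * x - a‖ < δ

open scoped CStarAlgebra

section Unital

variable {B : Type*} [CStarAlgebra B] [PartialOrder B] [StarOrderedRing B]

lemma IsStrictlyPositive.exists_isSelfAdjoint_mul_mul_self_eq_one {c : B}
    (hc : IsStrictlyPositive c) : ∃ d : B, IsSelfAdjoint d ∧ d * c * d = 1 := by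
  refine ⟨c ^ (-(1 / 2) : ℝ), CFC.rpow_nonneg.isSelfAdjoint, ?_⟩
  nth_rw 2 [← CFC.rpow_one c hc.nonneg]
  rw [← CFC.rpow_add hc.isUnit, ← CFC.rpow_add hc.isUnit]
  norm_num [CFC.rpow_zero c hc.nonneg]

lemma IsSelfAdjoint.exists_norm_star_mul_mul_sub_mul_self_le {s v : B} (hs : IsSelfAdjoint s)
    (hsv : s * s ≤ v) {η : ℝ} (hη : 0 < η) :
    ∃ d : B, ‖star (d * s) * v * (d * s) - s * s‖ ≤ η := by
  have hv : 0 ≤ v := (hs.star_eq ▸ star_mul_self_nonneg s).trans hsv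
  obtain ⟨d, hd, hdcd⟩ := ((isStrictlyPositive_algebraMap (A := B) hη).add_nonneg hv)
    |>.exists_isSelfAdjoint_mul_mul_self_eq_one
  refine ⟨d, ?_⟩
  -- `s² = s d (η + v) d s`, so the error is `-η (ds)*(ds)`,
  -- and `(ds)(ds)* = d s² d ≤ d (η + v) d = 1`.
  have hdiff : star (d * s) * v * (d * s) - s * s = -(η • (star (d * s) * (d * s))) := by
    have hss : s * s = s * (d * (algebraMap ℝ B η + v) * d) * s := by rw [hdcd, mul_one]
    rw [hss, star_mul, hs.star_eq, hd.star_eq, Algebra.algebraMap_eq_smul_one]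
    simp only [mul_add, add_mul, mul_smul_comm, smul_mul_assoc, mul_one, mul_assoc]
    abel
  have hconj : (d * s) * star (d * s) ≤ 1 := by
    rw [star_mul, hs.star_eq, hd.star_eq, ← hdcd,
      show d * s * (s * d) = d * (s * s) * d by noncomm_ring]
    refine hd.conjugate_le_conjugate (hsv.trans ?_)
    simpa using (isStrictlyPositive_algebraMap (A := B) hη).nonneg
  have hnorm : ‖star (d * s) * (d * s)‖ ≤ 1 := by
    rw [CStarRing.norm_star_mul_self, ← CStarRing.norm_self_mul_star]
    exact (CStarAlgebra.norm_le_one_iff_of_nonneg _ (mul_star_self_nonneg _)).mpr hconj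
  rw [hdiff, norm_neg, norm_smul, Real.norm_of_nonneg hη.le]
  simpa using mul_le_mul_of_nonneg_left hnorm hη.le

end Unital

lemma Unitization.exists_inr_eq_mul_inr {R A : Type*} [CommSemiring R] [NonUnitalSemiring A]
    [Module R A] (d : Unitization R A) (s : A) : ∃ x : A, (x : Unitization R A) = d * s :=
  ⟨(d * s).snd, by ext <;> simp⟩

namespace CuntzSub

variable {A : Type*} [NonUnitalCStarAlgebra A]

lemma of_star_mul_mul {a b y : A} (h : CuntzSub a (star y * b * y)) : CuntzSub a b := by
  intro δ hδ
  obtain ⟨x, hx⟩ := h δ hδ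
  refine ⟨y * x, ?_⟩
  rwa [star_mul, show star x * star y * b * (y * x) = star x * (star y * b * y) * x by
    noncomm_ring]

lemma of_smul_right {a b : A} {c : ℝ} (hc : 0 < c) (h : CuntzSub a (c • b)) :
    CuntzSub a b := by
  intro δ hδ
  obtain ⟨x, hx⟩ := h δ hδ
  refine ⟨√c • x, ?_⟩
  convert hx using 2
  rw [star_smul, star_trivial, smul_mul_assoc, smul_mul_assoc, mul_smul_comm, smul_smul,
    Real.mul_self_sqrt hc.le, mul_smul_comm, smul_mul_assoc]

variable [PartialOrder A] [StarOrderedRing A]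

lemma of_le {u v : A} (hu : 0 ≤ u) (huv : u ≤ v) : CuntzSub u v := by
  intro δ hδ
  set s := CFC.sqrt u
  have hs : IsSelfAdjoint (s : A⁺¹) := (CFC.sqrt_nonneg u).isSelfAdjoint.inr ℂ
  have hsu : s * s = u := CFC.sqrt_mul_sqrt_self u hu
  have hsv : (s * s : A⁺¹) ≤ v := by
    rw [← Unitization.inr_mul, hsu]
    exact (Unitization.inr_le_iff u v hu.isSelfAdjoint (hu.trans huv).isSelfAdjoint).mpr huv
  obtain ⟨d, hd⟩ := hs.exists_norm_star_mul_mul_sub_mul_self_le hsv (half_pos hδ)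
  obtain ⟨x, hx⟩ := Unitization.exists_inr_eq_mul_inr d s
  refine ⟨x, lt_of_le_of_lt ?_ (half_lt_self hδ)⟩
  rwa [← Unitization.norm_inr (𝕜 := ℂ), ← hsu, Unitization.inr_sub, Unitization.inr_mul,
    Unitization.inr_mul, Unitization.inr_mul, Unitization.inr_star, hx]

end CuntzSub

section SqrtConjugate

variable {A : Type*} [NonUnitalCStarAlgebra A] {f : ℝ → ℝ}

lemma cfcₙ_sqrt_mul_self (hf : Continuous f) (hf0 : f 0 = 0) (hf_nonneg : ∀ t, 0 ≤ f t)
    (a : A) : cfcₙ (fun t => √(f t)) a * cfcₙ (fun t => √(f t)) a = cfcₙ f a := by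
  have hsqrt : Continuous fun t => √(f t) := hf.sqrt
  rw [← cfcₙ_mul _ _ a hsqrt.continuousOn (by simp [hf0]) hsqrt.continuousOn (by simp [hf0])]
  exact cfcₙ_congr fun t _ => Real.mul_self_sqrt (hf_nonneg t)

lemma cfcₙ_sqrt_mul_mul_self (hf : Continuous f) (hf0 : f 0 = 0) (hf_nonneg : ∀ t, 0 ≤ f t)
    {a : A} (ha : IsSelfAdjoint a) :
    cfcₙ (fun t => √(f t)) a * a * cfcₙ (fun t => √(f t)) a = cfcₙ (fun t => f t * t) a := by
  have hsqrt : Continuous fun t => √(f t) := hf.sqrt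
  nth_rw 2 [← cfcₙ_id' ℝ a]
  rw [← cfcₙ_mul (fun t => √(f t)) (fun t => t) a hsqrt.continuousOn (by simp [hf0])
      (continuousOn_id' _) rfl,
    ← cfcₙ_mul (fun t => √(f t) * t) _ a (hsqrt.mul continuous_id).continuousOn
      (by simp [hf0]) hsqrt.continuousOn (by simp [hf0])]
  refine cfcₙ_congr fun t _ => ?_
  rw [mul_right_comm, Real.mul_self_sqrt (hf_nonneg t)]

end SqrtConjugate

section PosPart

variable {A : Type*} [NonUnitalCStarAlgebra A] [PartialOrder A] [StarOrderedRing A] {ε : ℝ}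

lemma smul_cfcₙ_le_sqrt_conjugate (hε : 0 ≤ ε) {a : A} (ha : IsSelfAdjoint a) :
    ε • cfcₙ (fun t => max (t - ε) 0) a ≤
      cfcₙ (fun t => √(max (t - ε) 0)) a * a * cfcₙ (fun t => √(max (t - ε) 0)) a := by
  have hg : Continuous fun t : ℝ => max (t - ε) 0 := by fun_prop
  have hg0 : max (0 - ε) 0 = 0 := by simpa using hε
  rw [cfcₙ_sqrt_mul_mul_self hg hg0 (fun t => le_max_right _ _) ha,
    ← cfcₙ_smul ε _ a hg.continuousOn hg0]
  refine cfcₙ_mono (fun t _ => ?_) (hg.const_smul ε).continuousOn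
    (hg.mul continuous_id).continuousOn (by simp [hε]) (by simp [hε])
  rcases le_total t ε with hle | hle
  · simp [max_eq_right (sub_nonpos.mpr hle)]
  · rw [smul_eq_mul, max_eq_left (sub_nonneg.mpr hle), mul_comm]
    exact mul_le_mul_of_nonneg_left hle (sub_nonneg.mpr hle)

lemma sub_norm_sub_smul_cfcₙ_le_sqrt_conjugate (hε : 0 ≤ ε) {a b : A} (ha : IsSelfAdjoint a)
    (hb : IsSelfAdjoint b) :
    (ε - ‖a - b‖) • cfcₙ (fun t => max (t - ε) 0) a ≤
      cfcₙ (fun t => √(max (t - ε) 0)) a * b * cfcₙ (fun t => √(max (t - ε) 0)) a := by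
  set e := cfcₙ (fun t => max (t - ε) 0) a
  set q := cfcₙ (fun t => √(max (t - ε) 0)) a
  have hqq : q * q = e :=
    cfcₙ_sqrt_mul_self (by fun_prop) (by simpa using hε) (fun t => le_max_right _ _) a
  have hperturb : q * (a - b) * q ≤ ‖a - b‖ • e := by
    have hq : IsSelfAdjoint q := cfcₙ_predicate _ a
    have := CStarAlgebra.star_left_conjugate_le_norm_smul (a := q) (ha.sub hb)
    rwa [hq.star_eq, hqq] at this
  calc (ε - ‖a - b‖) • e = ε • e - ‖a - b‖ • e := sub_smul ..
    _ ≤ q * a * q - q * (a - b) * q :=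
      sub_le_sub (smul_cfcₙ_le_sqrt_conjugate hε ha) hperturb
    _ = q * b * q := by noncomm_ring

end PosPart

theorem cuntz_below_of_close_general {A : Type*} [NonUnitalCStarAlgebra A]
    [PartialOrder A] [StarOrderedRing A] (a b : A) (ε : ℝ)
    (ha : 0 ≤ a) (hb : 0 ≤ b) (hab : ‖a - b‖ < ε) :
    CuntzSub (cfcₙ (fun t : ℝ => max (t - ε) 0) a) b := by
  have hε : 0 ≤ ε := (norm_nonneg _).trans hab.le
  have hr : 0 < ε - ‖a - b‖ := sub_pos.mpr hab
  set q := cfcₙ (fun t => √(max (t - ε) 0)) a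
  have hle : cfcₙ (fun t : ℝ => max (t - ε) 0) a ≤ (ε - ‖a - b‖)⁻¹ • (star q * b * q) := by
    rw [(cfcₙ_predicate _ a : IsSelfAdjoint q).star_eq, le_inv_smul_iff_of_pos hr]
    exact sub_norm_sub_smul_cfcₙ_le_sqrt_conjugate hε ha.isSelfAdjoint hb.isSelfAdjoint
  exact ((CuntzSub.of_le (cfcₙ_nonneg fun t _ => le_max_right _ _) hle).of_smul_right
    (inv_pos.mpr hr)).of_star_mul_mul

/-- If `a, b` are positive with `‖a - b‖ < ε`, then `(a - ε)₊ ≾ b`. -/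
theorem cuntz_below_of_close {A : Type*} [NonUnitalCStarAlgebra A]
    [PartialOrder A] [StarOrderedRing A] (a b : A) (ε : ℝ) (hε : 0 < ε)
    (ha : 0 ≤ a) (hb : 0 ≤ b) (hab : ‖a - b‖ < ε) :
    CuntzSub (cfcₙ (fun t : ℝ => max (t - ε) 0) a) b :=
  cuntz_below_of_close_general a b ε ha hb hab
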